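/- Normalization is idempotent: for every normalized regular expression E (viewed as a plain regular expression via right-associating its unions), norm(E) = E. -/
import Mathlib


/-- Normalized regular expression syntax trees over alphabet `ℕ`. -/
inductive NE : Type where
  | zero : NE
  | one : NE
  | letter : ℕ → NE
  | union : List NE → NE
  | cat : NE → NE → NE
  | star : NE → NE

namespace NE

def isUnion : NE → Prop
  | union _ => True
  | _ => False

def isCat : NE → Prop
  | cat _ _ => True
  | _ => False

def isStar : NE → Prop
  | star _ => True
  | _ => False

/-- Well-formedness of normalized expressions w.r.t. a fixed total order `lt`. -/
inductive Norm (lt : NE → NE → Prop) : NE → Prop where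
  | zero : Norm lt zero
  | one : Norm lt one
  | letter (n : ℕ) : Norm lt (letter n)
  | union (es : List NE) (hlen : 2 ≤ es.length)
      (hmem : ∀ e ∈ es, Norm lt e)
      (hshape : ∀ e ∈ es, ¬ e.isUnion ∧ e ≠ zero)
      (hsorted : es.Chain' lt) : Norm lt (union es)
  | cat (e₁ e₂ : NE) (h₁ : Norm lt e₁) (h₂ : Norm lt e₂)
      (hz₁ : e₁ ≠ zero) (ho₁ : e₁ ≠ one) (hz₂ : e₂ ≠ zero) (ho₂ : e₂ ≠ one)
      (hc : ¬ e₁.isCat) : Norm lt (cat e₁ e₂)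
  | star (e : NE) (h : Norm lt e) (hz : e ≠ zero) (ho : e ≠ one)
      (hs : ¬ e.isStar) : Norm lt (star e)

/-- Top-level summands: none for `0`, the list for a union, a singleton otherwise. -/
def summands : NE → List NE
  | zero => []
  | union es => es
  | e => [e]

/-- Insert into a strictly sorted list, dropping duplicates. -/
def insertSorted (lt : NE → NE → Prop) [DecidableRel lt] (a : NE) : List NE → List NE
  | [] => [a]
  | b :: l => if lt a b then a :: b :: l
              else if lt b a then b :: insertSorted lt a l
              else b :: l

/-- Sort and de-duplicate a list of expressions. -/
def sortDedup (lt : NE → NE → Prop) [DecidableRel lt] : List NE → List NE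
  | [] => []
  | a :: l => insertSorted lt a (sortDedup lt l)

/-- Rebuild a normalized expression from a list of summands. -/
def ofSummands : List NE → NE
  | [] => zero
  | [e] => e
  | es => union es

/-- The operation ⊕ of the paper. -/
def nunion (lt : NE → NE → Prop) [DecidableRel lt] (e₁ e₂ : NE) : NE :=
  ofSummands (sortDedup lt (summands e₁ ++ summands e₂))

/-- The operation ⊙ of the paper. -/
def ncat : NE → NE → NE
  | zero, _ => zero
  | _, zero => zero
  | one, e => e
  | e, one => e
  | cat f₁ f₂, e₂ => cat f₁ (ncat f₂ e₂)
  | e₁, e₂ => cat e₁ e₂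

/-- The operation `iter` of the paper. -/
def niter : NE → NE
  | zero => one
  | one => one
  | star e => star e
  | e => star e

/-- The language denoted by a normalized expression (union = sum of languages). -/
def lang : NE → Language ℕ
  | zero => 0
  | one => 1
  | letter n => {[n]}
  | union es => es.attach.foldr (fun e acc => lang e.1 + acc) 0
  | cat e₁ e₂ => lang e₁ * lang e₂
  | star e => KStar.kstar (lang e)
decreasing_by
  all_goals simp_wf
  · have := List.sizeOf_lt_of_mem e.2
    omega
  all_goals omega

end NE

/-- Normalization of plain regular expressions into normalized expressions. -/
def normRE (lt : NE → NE → Prop) [DecidableRel lt] : RegularExpression ℕ → NE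
  | .zero => .zero
  | .epsilon => .one
  | .char n => .letter n
  | .plus a b => NE.nunion lt (normRE lt a) (normRE lt b)
  | .comp a b => NE.ncat (normRE lt a) (normRE lt b)
  | .star a => NE.niter (normRE lt a)

mutual
/-- Embedding of normalized expressions into plain regular expressions,
right-associating unions. -/
def toRE : NE → RegularExpression ℕ
  | .zero => 0
  | .one => 1
  | .letter n => RegularExpression.char n
  | .union es => toREList es
  | .cat a b => (toRE a).comp (toRE b)
  | .star a => (toRE a).star

def toREList : List NE → RegularExpression ℕ
  | [] => 0
  | [e] => toRE e
  | e :: rest => (toRE e).plus (toREList rest)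
end

lemma summands_eq_of_shape (e : NE) (hu : ¬ e.isUnion) (hz : e ≠ NE.zero) :
    NE.summands e = [e] := by
  cases e <;> simp_all [NE.isUnion, NE.summands]

lemma summands_ofSummands (l : List NE) (hne : l ≠ [])
    (hshape : ∀ e ∈ l, ¬ e.isUnion ∧ e ≠ NE.zero) :
    NE.summands (NE.ofSummands l) = l := by
  match l with
  | [] => simp at hne
  | [e] =>
    have := hshape e (by simp)
    simpa [NE.ofSummands] using summands_eq_of_shape e this.1 this.2
  | a :: b :: rest => rfl

lemma insertSorted_of_chain (lt : NE → NE → Prop) [DecidableRel lt] (a : NE) (l : List NE)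
    (h : List.Chain' lt (a :: l)) : NE.insertSorted lt a l = a :: l := by
  cases l with
  | nil => rfl
  | cons b l =>
    have hab : lt a b := (List.isChain_cons_cons.mp h).1
    simp [NE.insertSorted, hab]

lemma sortDedup_of_chain (lt : NE → NE → Prop) [DecidableRel lt] (l : List NE)
    (h : List.Chain' lt l) : NE.sortDedup lt l = l := by
  induction l with
  | nil => rfl
  | cons a l ih =>
    rw [NE.sortDedup, ih h.tail, insertSorted_of_chain lt a l h]

lemma ncat_eq (a b : NE) (hz₁ : a ≠ NE.zero) (ho₁ : a ≠ NE.one)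
    (hz₂ : b ≠ NE.zero) (ho₂ : b ≠ NE.one) (hc : ¬ a.isCat) :
    NE.ncat a b = NE.cat a b := by
  cases a <;> cases b <;> simp_all [NE.isCat, NE.ncat]

lemma niter_eq (a : NE) (hz : a ≠ NE.zero) (ho : a ≠ NE.one) (hs : ¬ a.isStar) :
    NE.niter a = NE.star a := by
  cases a <;> simp_all [NE.isStar, NE.niter]

lemma normRE_toREList (lt : NE → NE → Prop) [DecidableRel lt] (l : List NE)
    (hne : l ≠ [])
    (hIH : ∀ e ∈ l, normRE lt (toRE e) = e)
    (hshape : ∀ e ∈ l, ¬ e.isUnion ∧ e ≠ NE.zero)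
    (hsorted : List.Chain' lt l) :
    normRE lt (toREList l) = NE.ofSummands l := by
  match l with
  | [] => simp at hne
  | [e] =>
    simp only [toREList, NE.ofSummands]
    exact hIH e (by simp)
  | a :: b :: rest =>
    have hrec : normRE lt (toREList (b :: rest)) = NE.ofSummands (b :: rest) :=
      normRE_toREList lt (b :: rest) (by simp)
        (fun e he => hIH e (by simp [he])) (fun e he => hshape e (by simp [he]))
        hsorted.tail
    show normRE lt ((toRE a).plus (toREList (b :: rest))) = _
    rw [normRE, hIH a (by simp), hrec, NE.nunion,
      summands_eq_of_shape a (hshape a (by simp)).1 (hshape a (by simp)).2,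
      summands_ofSummands (b :: rest) (by simp)
        (fun e he => hshape e (by simp [he]))]
    simp only [List.singleton_append]
    rw [sortDedup_of_chain lt _ hsorted]

/-- normalization is the identity on normalized expressions. -/
theorem norm_toRE (lt : NE → NE → Prop) [DecidableRel lt] [IsStrictTotalOrder NE lt]
    (E : NE) (hE : NE.Norm lt E) :
    normRE lt (toRE E) = E := by
  induction hE with
  | zero => rfl
  | one => rfl
  | letter n => rfl
  | union es hlen hmem hshape hsorted ih =>
    show normRE lt (toREList es) = _
    rw [normRE_toREList lt es (by rintro rfl; simp at hlen) ih hshape hsorted]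
    match es, hlen with
    | a :: b :: rest, _ => rfl
  | cat e₁ e₂ h₁ h₂ hz₁ ho₁ hz₂ ho₂ hc ih₁ ih₂ =>
    show NE.ncat (normRE lt (toRE e₁)) (normRE lt (toRE e₂)) = _
    rw [ih₁, ih₂, ncat_eq e₁ e₂ hz₁ ho₁ hz₂ ho₂ hc]
  | star e h hz ho hs ih =>
    show NE.niter (normRE lt (toRE e)) = _
    rw [ih, niter_eq e hz ho hs]
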